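/- arXiv:math/0606348 — 2 statements merged into one kernel-verified Lean document; each statement's English description precedes it below -/
import Mathlib

section
/- Let g, r, d, k, d₁, d₂, k₁, k₂ be integers with g ≥ 2, r ≥ 1, k₁ ≥ 1, d = r·d₁ + d₂, k = r·k₁ + k₂, 0 ≤ d₂ < r, 0 ≤ k₂ < r, d₂ ≠ 0, d₂ ≥ k₂, and g − (k₁+1)·(g − d₁ + k₁ − 1) ≥ 1. Then r²(g−1) + 1 − k·(k − d + r(g−1)) ≥ 1. -/
theorem stmt_8 (g r d k d₁ d₂ k₁ k₂ : ℤ)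
    (hg : 2 ≤ g) (hr : 1 ≤ r) (hk₁ : 1 ≤ k₁)
    (hd : d = r * d₁ + d₂) (hk : k = r * k₁ + k₂)
    (hd₂ : 0 ≤ d₂) (hd₂r : d₂ < r) (hk₂ : 0 ≤ k₂) (hk₂r : k₂ < r)
    (hd₂0 : d₂ ≠ 0) (hdk : k₂ ≤ d₂)
    (hcond : g - (k₁ + 1) * (g - d₁ + k₁ - 1) ≥ 1) :
    r ^ 2 * (g - 1) + 1 - k * (k - d + r * (g - 1)) ≥ 1 := by
  have hB : k - d + r * (g - 1) = r * (g - 1 - d₁ + k₁) + (k₂ - d₂) := by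
    rw [hd, hk]; ring
  set A : ℤ := g - 1 - d₁ + k₁ with hA
  have hcond' : (k₁ + 1) * A ≤ g - 1 := by rw [hA]; linarith [hcond]
  have hkpos : 0 < k := by rw [hk]; nlinarith
  rcases le_or_gt (k - d + r * (g - 1)) 0 with hB0 | hB0
  · nlinarith [mul_nonpos_of_nonneg_of_nonpos (le_of_lt hkpos) hB0, sq_nonneg r]
  · have hApos : 0 < A := by nlinarith
    have hkle : k < r * (k₁ + 1) := by rw [hk]; nlinarith
    have h1 : k * (k - d + r * (g - 1)) < r * (k₁ + 1) * (k - d + r * (g - 1)) := by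
      exact mul_lt_mul_of_pos_right hkle hB0
    have h2 : k - d + r * (g - 1) ≤ r * A := by rw [hB]; nlinarith
    have h3 : r * (k₁ + 1) * (k - d + r * (g - 1)) ≤ r * (k₁ + 1) * (r * A) := by
      have : 0 < r * (k₁ + 1) := by positivity
      exact mul_le_mul_of_nonneg_left h2 this.le
    nlinarith [mul_le_mul_of_nonneg_left hcond' (by positivity : (0:ℤ) ≤ r ^ 2)]
end

section
/- Let g, r, d, k, d₁, d₂, k₁, k₂ be integers with g ≥ 2, r ≥ 1, k₁ ≥ 1, d = r·d₁ + d₂, k = r·k₁ + k₂, 0 ≤ d₂ < r, 0 ≤ k₂ < r, d₂ < k₂, and g − (k₁+1)·(g − d₁ + k₁) ≥ 1. Then r²(g−1) + 1 − k·(k − d + r(g−1)) ≥ 1. -/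
theorem stmt_10 (g r d k d₁ d₂ k₁ k₂ : ℤ)
    (hg : 2 ≤ g) (hr : 1 ≤ r) (hk₁ : 1 ≤ k₁)
    (hd : d = r * d₁ + d₂) (hk : k = r * k₁ + k₂)
    (hd₂ : 0 ≤ d₂) (hd₂r : d₂ < r) (hk₂ : 0 ≤ k₂) (hk₂r : k₂ < r)
    (hdk : d₂ < k₂)
    (hcond : g - (k₁ + 1) * (g - d₁ + k₁) ≥ 1) :
    r ^ 2 * (g - 1) + 1 - k * (k - d + r * (g - 1)) ≥ 1 := by
  subst hd hk
  set A := g - d₁ + k₁ with hA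
  have hF : r * k₁ + k₂ - (r * d₁ + d₂) + r * (g - 1) = r * (A - 1) + (k₂ - d₂) := by ring
  rw [hF]
  have hk_pos : 0 < r * k₁ + k₂ := by positivity
  have hkub : r * k₁ + k₂ ≤ r * (k₁ + 1) - 1 := by nlinarith
  have hgA : g - 1 ≥ (k₁ + 1) * A := by linarith
  rcases le_or_gt (r * (A - 1) + (k₂ - d₂)) 0 with h | h
  · nlinarith [mul_nonpos_of_nonneg_of_nonpos (le_of_lt hk_pos) h, sq_nonneg r, mul_pos (lt_of_lt_of_le one_pos hr) (lt_of_lt_of_le one_pos hr)]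
  · have hfub : r * (A - 1) + (k₂ - d₂) ≤ r * A - 1 := by nlinarith
    have hA1 : 1 ≤ A := by nlinarith
    have h1 : (r * k₁ + k₂) * (r * (A - 1) + (k₂ - d₂)) ≤ (r * (k₁ + 1) - 1) * (r * A - 1) := by
      apply mul_le_mul hkub hfub (by linarith) (by nlinarith)
    nlinarith [mul_pos (lt_of_lt_of_le one_pos hr) hA1]
end
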